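/- (Binning/list-decoding step of the compress-and-forward scheme.) Let (Ŷ,Y) have joint pmf p(ŷ,y) on finite alphabets. Let Y^n be a random sequence on 𝒴^n, let z0 be a fixed index, and let Ŷ^n(z) for z∈{1,…,⌈2^{nR̂}⌉} be codewords each distributed i.i.d. according to the marginal p(ŷ) such that Ŷ^n(z) is independent of Y^n for every z ≠ z0. Independently of everything else, assign to each index z a bin B(z) uniformly at random from {1,…,⌈2^{nR}⌉}. There exists δ(ε)>0 with δ(ε)→0 as ε→0 such that if R̂ < R + I(Ŷ;Y) − δ(ε), then the probability that there exists an index z ≠ z0 with B(z) = B(z0) and (Ŷ^n(z),Y^n) jointly strongly ε-typical with respect to p(ŷ,y) tends to 0 as n→∞. -/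

import Mathlib

open Finset
open scoped Classical

noncomputable section

/-- `p` is a probability mass function on a finite type. -/
def IsPmf {A : Type} [Fintype A] (p : A → ℝ) : Prop :=
  (∀ a, 0 ≤ p a) ∧ ∑ a, p a = 1

/-- `p` is a transition kernel: for each `a`, `p a` is a pmf. -/
def IsKernel {A B : Type} [Fintype B] (p : A → B → ℝ) : Prop :=
  ∀ a, IsPmf (p a)

/-- Distribution (pmf) of a random variable `X` under the pmf `μ` on `Ω`. -/
def rvDist {Ω A : Type} [Fintype Ω] (μ : Ω → ℝ) (X : Ω → A) (a : A) : ℝ :=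
  ∑ ω, if X ω = a then μ ω else 0

/-- Shannon entropy (in bits) of the random variable `X` under `μ`. -/
def rvEnt {Ω A : Type} [Fintype Ω] [Fintype A] (μ : Ω → ℝ) (X : Ω → A) : ℝ :=
  -∑ a, rvDist μ X a * Real.logb 2 (rvDist μ X a)

/-- Mutual information `I(X;Y)` under `μ`. -/
def rvMI {Ω A B : Type} [Fintype Ω] [Fintype A] [Fintype B]
    (μ : Ω → ℝ) (X : Ω → A) (Y : Ω → B) : ℝ :=
  rvEnt μ X + rvEnt μ Y - rvEnt μ (fun ω => (X ω, Y ω))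

/-- Conditional mutual information `I(X;Y|Z)` under `μ`. -/
def rvCMI {Ω A B C : Type} [Fintype Ω] [Fintype A] [Fintype B] [Fintype C]
    (μ : Ω → ℝ) (X : Ω → A) (Y : Ω → B) (Z : Ω → C) : ℝ :=
  rvEnt μ (fun ω => (X ω, Z ω)) + rvEnt μ (fun ω => (Y ω, Z ω))
    - rvEnt μ (fun ω => (X ω, Y ω, Z ω)) - rvEnt μ Z

/-- Number of occurrences of the symbol `a` in the length-`n` sequence `x`. -/
def nOcc {A : Type} {n : ℕ} (x : Fin n → A) (a : A) : ℕ :=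
  (Finset.univ.filter fun j => x j = a).card

/-- Strong `ε`-typicality of the sequence `x` with respect to the pmf `p`:
`|N(a|xⁿ)/n − p a| ≤ ε · p a` for every symbol `a`. -/
def StrongTypical {A : Type} [Fintype A] (p : A → ℝ) (ε : ℝ) {n : ℕ}
    (x : Fin n → A) : Prop :=
  ∀ a, |((nOcc x a : ℝ)) / n - p a| ≤ ε * p a

section Bin

variable {H Y : Type} [Fintype H] [Fintype Y]

/-- Marginal pmf of `Ŷ` under the joint pmf `p` on `Ŷ × Y`. -/
def margH (p : H × Y → ℝ) (h : H) : ℝ := ∑ y, p (h, y)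

/-- Probability, under the joint distribution `ν` of the sequence `Yⁿ` and the
codebook `(Ŷⁿ(z))_z`, and under an independent uniformly random assignment
`b : z ↦ bin` into `B` bins, that some index `z ≠ z0` has `b z = b z0` and `Ŷⁿ(z)`
jointly strongly `ε`-typical with `Yⁿ` w.r.t. the joint pmf `p(ŷ,y)`. -/
def binProb (p : H × Y → ℝ) (ε : ℝ) {n Z : ℕ} (B : ℕ) (z0 : Fin Z)
    (ν : (Fin n → Y) × (Fin Z → Fin n → H) → ℝ) : ℝ :=
  ∑ ω : (Fin n → Y) × (Fin Z → Fin n → H), ∑ b : Fin Z → Fin B,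
    if ∃ z : Fin Z, z ≠ z0 ∧ b z = b z0 ∧
        StrongTypical p ε (fun j => (ω.2 z j, ω.1 j)) then
      ν ω * ((B : ℝ) ^ Z)⁻¹
    else 0

end Bin

/-!
Union bound over the wrong indices `z ≠ z₀`: each falls into the bin of `z₀` with probability
`1/B`, and, being i.i.d. `∼ p(ŷ)` and independent of `Yⁿ`, is jointly typical with `Yⁿ` with
probability at most `2^{-n(I(Ŷ;Y) - εS)}`, where `S = H(Ŷ) + H(Y) + H(Ŷ,Y)`. The latter follows
from the strong-typicality estimates `2^{-n(1+ε)H(q)} ≤ qⁿ(xⁿ) ≤ 2^{-n(1-ε)H(q)}`, applied to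
`(ûⁿ,yⁿ)` and to both of its marginals: `p(ûⁿ) p(yⁿ) ≤ 2^{-n(I-εS)} p(ûⁿ,yⁿ)` for typical
`(ûⁿ,yⁿ)`, and summing over `ûⁿ` gives `p(yⁿ)` on the right. So the probability in question is at
most `2^{n(R̂ - R - I + εS)}`, which tends to `0` for `δ(ε) = ε(1 + |S|)`.
-/

def shannonEntropy {A : Type} [Fintype A] (w : A → ℝ) : ℝ :=
  -∑ a, w a * Real.logb 2 (w a)

lemma rvEnt_eq_shannonEntropy {Ω A : Type} [Fintype Ω] [Fintype A] (μ : Ω → ℝ) (X : Ω → A) :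
    rvEnt μ X = shannonEntropy (rvDist μ X) := rfl

lemma IsPmf.le_one {A : Type} [Fintype A] {p : A → ℝ} (hp : IsPmf p) (a : A) : p a ≤ 1 :=
  hp.2 ▸ Finset.single_le_sum (fun b _ => hp.1 b) (Finset.mem_univ a)

lemma isPmf_rvDist {Ω A : Type} [Fintype Ω] [Fintype A] {μ : Ω → ℝ} (hμ : IsPmf μ)
    (X : Ω → A) : IsPmf (rvDist μ X) := by
  refine ⟨fun a => Finset.sum_nonneg fun ω _ => ?_, ?_⟩
  · split_ifs
    exacts [hμ.1 ω, le_rfl]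
  · rw [← hμ.2]
    unfold rvDist
    rw [Finset.sum_comm]
    simp

lemma sum_mul_rvDist {Ω A : Type} [Fintype Ω] [Fintype A] (μ : Ω → ℝ) (X : Ω → A)
    (f : A → ℝ) : ∑ a, f a * rvDist μ X a = ∑ ω, f (X ω) * μ ω := by
  simp only [rvDist, Finset.mul_sum, mul_ite, mul_zero]
  rw [Finset.sum_comm]
  simp

section Marginals

variable {H Y : Type} [Fintype H] [Fintype Y]

lemma rvDist_fst (p : H × Y → ℝ) : rvDist p Prod.fst = margH p := by
  ext h
  simp only [rvDist, margH, Fintype.sum_prod_type]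
  rw [Finset.sum_eq_single h (fun b _ hb => by simp [hb]) (by simp)]
  simp

lemma rvDist_snd_apply (p : H × Y → ℝ) (y : Y) : rvDist p Prod.snd y = ∑ h, p (h, y) := by
  simp only [rvDist, Fintype.sum_prod_type_right]
  rw [Finset.sum_eq_single y (fun b _ hb => by simp [hb]) (by simp)]
  simp

lemma rvDist_pair (p : H × Y → ℝ) : rvDist p (fun ω => (ω.1, ω.2)) = p := by
  ext a
  simp [rvDist]

lemma rvMI_fst_snd (p : H × Y → ℝ) :
    rvMI p Prod.fst Prod.snd
      = rvEnt p Prod.fst + rvEnt p Prod.snd - shannonEntropy p := by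
  rw [rvMI, rvEnt_eq_shannonEntropy p (fun ω => (ω.1, ω.2)), rvDist_pair]

end Marginals

lemma prod_apply_eq_prod_pow_nOcc {A M : Type} [Fintype A] [CommMonoid M] {n : ℕ}
    (f : A → M) (x : Fin n → A) : ∏ j, f (x j) = ∏ a, f a ^ nOcc x a := by
  simp_rw [← Finset.prod_fiberwise' Finset.univ x f, Finset.prod_const]
  rfl

lemma nOcc_comp {A B : Type} [Fintype A] {n : ℕ} (f : A → B) (x : Fin n → A) (b : B) :
    nOcc (f ∘ x) b = ∑ a, if f a = b then nOcc x a else 0 := by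
  rw [← Finset.sum_filter, nOcc,
    Finset.card_eq_sum_card_fiberwise (f := x) (t := Finset.univ.filter (f · = b))]
  · refine Finset.sum_congr rfl fun a ha => ?_
    rw [nOcc, Finset.filter_filter]
    congr 1
    ext j
    simp only [Finset.mem_filter] at ha ⊢
    constructor
    · exact fun h => ⟨Finset.mem_univ j, h.2.2⟩
    · rintro ⟨-, rfl⟩; exact ⟨Finset.mem_univ _, ha.2, rfl⟩
  · intro j hj
    simpa using hj

section TwoPow

variable {w c : ℝ} {N : ℕ}

lemma pow_eq_two_rpow_mul_logb (hw : 0 < w) : w ^ N = (2 : ℝ) ^ (N * Real.logb 2 w) := by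
  rw [mul_comm, Real.rpow_mul zero_le_two, Real.rpow_logb two_pos one_lt_two.ne' hw,
    Real.rpow_natCast]

lemma pow_le_two_rpow_of_le (hw0 : 0 ≤ w) (hw1 : w ≤ 1) (hN : w = 0 → N = 0)
    (hc : c * w ≤ N) : w ^ N ≤ (2 : ℝ) ^ (c * (w * Real.logb 2 w)) := by
  rcases hw0.eq_or_lt with rfl | hw
  · simp [hN rfl]
  rw [pow_eq_two_rpow_mul_logb hw, Real.rpow_le_rpow_left_iff one_lt_two, ← mul_assoc]
  exact mul_le_mul_of_nonpos_right hc (Real.logb_nonpos one_lt_two hw0 hw1)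

lemma two_rpow_le_pow_of_le (hw0 : 0 ≤ w) (hw1 : w ≤ 1) (hN : w = 0 → N = 0)
    (hc : N ≤ c * w) : (2 : ℝ) ^ (c * (w * Real.logb 2 w)) ≤ w ^ N := by
  rcases hw0.eq_or_lt with rfl | hw
  · simp [hN rfl]
  rw [pow_eq_two_rpow_mul_logb hw, Real.rpow_le_rpow_left_iff one_lt_two, ← mul_assoc]
  exact mul_le_mul_of_nonpos_right hc (Real.logb_nonpos one_lt_two hw0 hw1)

end TwoPow

lemma two_rpow_mul_neg_shannonEntropy {A : Type} [Fintype A] (w : A → ℝ) (c : ℝ) :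
    (2 : ℝ) ^ (-(c * shannonEntropy w)) = ∏ a, (2 : ℝ) ^ (c * (w a * Real.logb 2 (w a))) := by
  rw [← Real.rpow_sum_of_pos two_pos, ← Finset.mul_sum, shannonEntropy, mul_neg, neg_neg]

namespace StrongTypical

variable {A : Type} [Fintype A] {p : A → ℝ} {ε : ℝ} {n : ℕ} {x : Fin n → A}

lemma nOcc_bounds (ht : StrongTypical p ε x) (a : A) :
    (1 - ε) * n * p a ≤ nOcc x a ∧ (nOcc x a : ℝ) ≤ (1 + ε) * n * p a := by
  rcases n.eq_zero_or_pos with rfl | hn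
  · simp [nOcc]
  have hn' : (0 : ℝ) < n := by exact_mod_cast hn
  obtain ⟨hlo, hhi⟩ := abs_le.mp (ht a)
  constructor
  · have := (le_div_iff₀ hn').mp (by linarith : (1 - ε) * p a ≤ (nOcc x a : ℝ) / n)
    linarith
  · have := (div_le_iff₀ hn').mp (by linarith : (nOcc x a : ℝ) / n ≤ (1 + ε) * p a)
    linarith

lemma nOcc_eq_zero (ht : StrongTypical p ε x) {a : A} (ha : p a = 0) : nOcc x a = 0 := by
  have := (ht.nOcc_bounds a).2
  rw [ha, mul_zero] at this
  exact_mod_cast this.antisymm (Nat.cast_nonneg _)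

lemma comp {B : Type} [Fintype B] (ht : StrongTypical p ε x) (f : A → B) :
    StrongTypical (rvDist p f) ε (f ∘ x) := by
  intro b
  simp only [nOcc_comp, rvDist, ← Finset.sum_filter, Nat.cast_sum, Finset.sum_div,
    ← Finset.sum_sub_distrib, Finset.mul_sum]
  exact (Finset.abs_sum_le_sum_abs _ _).trans (Finset.sum_le_sum fun a _ => ht a)

lemma prod_le (hp : IsPmf p) (ht : StrongTypical p ε x) :
    ∏ j, p (x j) ≤ (2 : ℝ) ^ (-((1 - ε) * n * shannonEntropy p)) := by
  rw [prod_apply_eq_prod_pow_nOcc, two_rpow_mul_neg_shannonEntropy]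
  exact Finset.prod_le_prod (fun a _ => pow_nonneg (hp.1 a) _) fun a _ =>
    pow_le_two_rpow_of_le (hp.1 a) (hp.le_one a) ht.nOcc_eq_zero (ht.nOcc_bounds a).1

lemma le_prod (hp : IsPmf p) (ht : StrongTypical p ε x) :
    (2 : ℝ) ^ (-((1 + ε) * n * shannonEntropy p)) ≤ ∏ j, p (x j) := by
  rw [prod_apply_eq_prod_pow_nOcc, two_rpow_mul_neg_shannonEntropy]
  exact Finset.prod_le_prod (fun a _ => by positivity) fun a _ =>
    two_rpow_le_pow_of_le (hp.1 a) (hp.le_one a) ht.nOcc_eq_zero (ht.nOcc_bounds a).2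

end StrongTypical

/-- `-(I(Ŷ;Y) - εS)` in the notation above. -/
def listExponent {H Y : Type} [Fintype H] [Fintype Y] (p : H × Y → ℝ) (ε : ℝ) : ℝ :=
  (1 + ε) * shannonEntropy p - (1 - ε) * (rvEnt p Prod.fst + rvEnt p Prod.snd)

section ListSize

variable {H Y : Type} [Fintype H] [Fintype Y] {p : H × Y → ℝ}

lemma sum_prod_apply_pair_eq_prod_rvDist_snd {n : ℕ} (y : Fin n → Y) :
    ∑ u : Fin n → H, ∏ j, p (u j, y j) = ∏ j, rvDist p Prod.snd (y j) := by
  simp only [rvDist_snd_apply, Fintype.prod_sum]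

lemma sum_typical_prod_margH_le (hp : IsPmf p) (ε : ℝ) {n : ℕ} (y : Fin n → Y) :
    ∑ u : Fin n → H,
        (if StrongTypical p ε (fun j => (u j, y j)) then ∏ j, margH p (u j) else 0)
      ≤ (2 : ℝ) ^ (n * listExponent p ε) := by
  set c : ℝ := (2 : ℝ) ^ (n * listExponent p ε)
  rw [← Finset.sum_filter]
  set T := Finset.univ.filter fun u : Fin n → H => StrongTypical p ε (fun j => (u j, y j))
  rcases T.eq_empty_or_nonempty with hT | ⟨u₀, hu₀⟩
  · rw [hT, Finset.sum_empty]
    positivity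
  have hy : StrongTypical (rvDist p Prod.snd) ε y := (Finset.mem_filter.mp hu₀).2.comp Prod.snd
  set PY := ∏ j, rvDist p Prod.snd (y j)
  have hPY : 0 < PY := (by positivity : (0 : ℝ) < _).trans_le
    (hy.le_prod (isPmf_rvDist hp Prod.snd))
  have typical_ratio : ∀ u ∈ T, (∏ j, margH p (u j)) * PY ≤ c * ∏ j, p (u j, y j) := by
    intro u hu
    have hjoint := (Finset.mem_filter.mp hu).2
    have hmarg : StrongTypical (rvDist p Prod.fst) ε u := hjoint.comp Prod.fst
    calc (∏ j, margH p (u j)) * PY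
        ≤ (2 : ℝ) ^ (-((1 - ε) * n * rvEnt p Prod.fst))
          * (2 : ℝ) ^ (-((1 - ε) * n * rvEnt p Prod.snd)) := by
          rw [← rvDist_fst]
          exact mul_le_mul (hmarg.prod_le (isPmf_rvDist hp _)) (hy.prod_le (isPmf_rvDist hp _))
            hPY.le (by positivity)
      _ = c * (2 : ℝ) ^ (-((1 + ε) * n * shannonEntropy p)) := by
          rw [← Real.rpow_add two_pos, ← Real.rpow_add two_pos, listExponent]
          ring_nf
      _ ≤ c * ∏ j, p (u j, y j) := by gcongr; exact hjoint.le_prod hp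
  refine le_of_mul_le_mul_right ?_ hPY
  calc (∑ u ∈ T, ∏ j, margH p (u j)) * PY
      ≤ ∑ u ∈ T, c * ∏ j, p (u j, y j) := by
        rw [Finset.sum_mul]
        exact Finset.sum_le_sum typical_ratio
    _ ≤ ∑ u : Fin n → H, c * ∏ j, p (u j, y j) :=
        Finset.sum_le_sum_of_subset_of_nonneg (Finset.filter_subset _ _)
          fun u _ _ => mul_nonneg (by positivity) (Finset.prod_nonneg fun j _ => hp.1 _)
    _ = c * PY := by rw [← Finset.mul_sum, sum_prod_apply_pair_eq_prod_rvDist_snd]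

lemma sum_typical_le_of_indep (hp : IsPmf p) (ε : ℝ) {Ω : Type} [Fintype Ω] {ν : Ω → ℝ}
    (hν : IsPmf ν) {n : ℕ} (Yn : Ω → Fin n → Y) (U : Ω → Fin n → H)
    (hind : ∀ y u, rvDist ν (fun ω => (Yn ω, U ω)) (y, u) = rvDist ν Yn y * ∏ j, margH p (u j)) :
    ∑ ω, (if StrongTypical p ε (fun j => (U ω j, Yn ω j)) then ν ω else 0)
      ≤ (2 : ℝ) ^ (n * listExponent p ε) := by
  have hq := isPmf_rvDist hν Yn
  calc ∑ ω, (if StrongTypical p ε (fun j => (U ω j, Yn ω j)) then ν ω else 0)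
      = ∑ w : (Fin n → Y) × (Fin n → H),
          (if StrongTypical p ε (fun j => (w.2 j, w.1 j)) then 1 else 0)
            * rvDist ν (fun ω => (Yn ω, U ω)) w := by
        rw [sum_mul_rvDist]
        simp only [ite_mul, one_mul, zero_mul]
    _ = ∑ y, rvDist ν Yn y * ∑ u : Fin n → H,
          (if StrongTypical p ε (fun j => (u j, y j)) then ∏ j, margH p (u j) else 0) := by
        simp only [Fintype.sum_prod_type, hind, Finset.mul_sum, ite_mul, one_mul, zero_mul,
          mul_ite, mul_zero]
    _ ≤ ∑ y, rvDist ν Yn y * (2 : ℝ) ^ (n * listExponent p ε) :=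
        Finset.sum_le_sum fun y _ =>
          mul_le_mul_of_nonneg_left (sum_typical_prod_margH_le hp ε y) (hq.1 y)
    _ = _ := by rw [← Finset.sum_mul, hq.2, one_mul]

end ListSize

lemma card_filter_apply_eq_apply {ι β : Type} [Fintype ι] [DecidableEq ι] [Fintype β]
    [DecidableEq β] {i j : ι} (hij : i ≠ j) :
    #{b : ι → β | b i = b j} = Fintype.card β ^ (Fintype.card ι - 1) := by
  let j' : {k // k ≠ i} := ⟨j, hij.symm⟩
  calc #{b : ι → β | b i = b j}
      = ∑ x : β × ({k // k ≠ i} → β), if x.1 = x.2 j' then 1 else 0 := by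
        rw [Finset.card_filter]
        exact Fintype.sum_equiv (Equiv.funSplitAt i β) _ _ fun b => rfl
    _ = Fintype.card ({k // k ≠ i} → β) := by
        rw [Fintype.sum_prod_type, Finset.sum_comm]
        simp
    _ = Fintype.card β ^ (Fintype.card ι - 1) := by
        rw [Fintype.card_fun, Fintype.card_subtype_compl, Fintype.card_subtype_eq]

lemma sum_ite_apply_eq_apply {Z B : ℕ} (hB : 0 < B) {z z₀ : Fin Z} (hz : z ≠ z₀) :
    ∑ b : Fin Z → Fin B, (if b z = b z₀ then ((B : ℝ) ^ Z)⁻¹ else 0) = (B : ℝ)⁻¹ := by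
  obtain ⟨k, rfl⟩ : ∃ k, Z = k + 1 := ⟨Z - 1, (Nat.succ_pred_eq_of_pos z.pos).symm⟩
  rw [Finset.sum_ite, Finset.sum_const_zero, add_zero, Finset.sum_const, nsmul_eq_mul,
    card_filter_apply_eq_apply hz]
  simp only [Fintype.card_fin, add_tsub_cancel_right, Nat.cast_pow, pow_succ, mul_inv]
  rw [← mul_assoc, mul_inv_cancel₀ (by positivity), one_mul]

lemma binProb_le {H Y : Type} [Fintype H] [Fintype Y] (p : H × Y → ℝ) (ε : ℝ) {n Z B : ℕ}
    (hB : 0 < B) (z₀ : Fin Z) {ν : (Fin n → Y) × (Fin Z → Fin n → H) → ℝ}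
    (hν : ∀ ω, 0 ≤ ν ω) {c : ℝ}
    (hc : ∀ z ≠ z₀, ∑ ω, (if StrongTypical p ε (fun j => (ω.2 z j, ω.1 j)) then ν ω else 0) ≤ c) :
    binProb p ε B z₀ ν ≤ (Z - 1 : ℕ) * ((B : ℝ)⁻¹ * c) := by
  set T : Fin Z → (Fin n → Y) × (Fin Z → Fin n → H) → ℝ := fun z ω =>
    if StrongTypical p ε (fun j => (ω.2 z j, ω.1 j)) then ν ω else 0
  have hT : ∀ z ω, 0 ≤ T z ω := fun z ω => by
    simp only [T]
    split_ifs
    exacts [hν ω, le_rfl]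
  have union_bound : ∀ ω (b : Fin Z → Fin B),
      (if ∃ z, z ≠ z₀ ∧ b z = b z₀ ∧ StrongTypical p ε (fun j => (ω.2 z j, ω.1 j)) then
        ν ω * ((B : ℝ) ^ Z)⁻¹ else 0)
      ≤ ∑ z ∈ Finset.univ.erase z₀, (if b z = b z₀ then ((B : ℝ) ^ Z)⁻¹ else 0) * T z ω := by
    intro ω b
    have hnonneg : ∀ z ∈ Finset.univ.erase z₀,
        0 ≤ (if b z = b z₀ then ((B : ℝ) ^ Z)⁻¹ else 0) * T z ω := fun z _ =>
      mul_nonneg (by split_ifs <;> positivity) (hT z ω)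
    split_ifs with hex
    · obtain ⟨z, hz, hbz, htyp⟩ := hex
      refine le_of_eq_of_le ?_
        (Finset.single_le_sum hnonneg (Finset.mem_erase.mpr ⟨hz, Finset.mem_univ z⟩))
      simp [T, hbz, htyp, mul_comm]
    · exact Finset.sum_nonneg hnonneg
  calc binProb p ε B z₀ ν
      ≤ ∑ ω : (Fin n → Y) × (Fin Z → Fin n → H), ∑ b : Fin Z → Fin B,
          ∑ z ∈ Finset.univ.erase z₀, (if b z = b z₀ then ((B : ℝ) ^ Z)⁻¹ else 0) * T z ω :=
        Finset.sum_le_sum fun ω _ => Finset.sum_le_sum fun b _ => union_bound ω b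
    _ = ∑ z ∈ Finset.univ.erase z₀,
          (∑ b : Fin Z → Fin B, if b z = b z₀ then ((B : ℝ) ^ Z)⁻¹ else 0) * ∑ ω, T z ω := by
        simp_rw [Finset.sum_mul_sum]
        rw [Finset.sum_comm]
        exact (Finset.sum_congr rfl fun b _ => Finset.sum_comm).trans Finset.sum_comm
    _ ≤ ∑ z ∈ Finset.univ.erase z₀, (B : ℝ)⁻¹ * c := by
        refine Finset.sum_le_sum fun z hz => ?_
        have hz := (Finset.mem_erase.mp hz).1
        rw [sum_ite_apply_eq_apply hB hz]
        exact mul_le_mul_of_nonneg_left (hc z hz) (by positivity)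
    _ = (Z - 1 : ℕ) * ((B : ℝ)⁻¹ * c) := by
        rw [Finset.sum_const, Finset.card_erase_of_mem (Finset.mem_univ _), Finset.card_univ,
          Fintype.card_fin, nsmul_eq_mul]

lemma natCast_ceil_sub_one_le {x : ℝ} (hx : 0 ≤ x) : ((⌈x⌉₊ - 1 : ℕ) : ℝ) ≤ x := by
  rcases (Nat.ceil x).eq_zero_or_pos with h | h
  · simp [h, hx]
  · rw [Nat.cast_sub h, Nat.cast_one]
    linarith [Nat.ceil_lt_add_one hx]

lemma tendsto_two_rpow_natCast_mul_of_neg {κ : ℝ} (hκ : κ < 0) :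
    Filter.Tendsto (fun n : ℕ => (2 : ℝ) ^ ((n : ℝ) * κ)) Filter.atTop (nhds 0) := by
  refine (tendsto_pow_atTop_nhds_zero_of_lt_one (by positivity)
    (Real.rpow_lt_one_of_one_lt_of_neg one_lt_two hκ)).congr fun n => ?_
  rw [← Real.rpow_natCast, ← Real.rpow_mul zero_le_two, mul_comm]

lemma binProb_nonneg {H Y : Type} [Fintype H] [Fintype Y] (p : H × Y → ℝ) (ε : ℝ)
    {n Z : ℕ} (B : ℕ) (z₀ : Fin Z) {ν : (Fin n → Y) × (Fin Z → Fin n → H) → ℝ}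
    (hν : ∀ ω, 0 ≤ ν ω) : 0 ≤ binProb p ε B z₀ ν :=
  Finset.sum_nonneg fun ω _ => Finset.sum_nonneg fun b _ => by
    split_ifs
    exacts [mul_nonneg (hν ω) (by positivity), le_rfl]

/-- **Binning/list-decoding step of the compress-and-forward scheme.**  Let `(Ŷ,Y)`
have joint pmf `p`.  For each blocklength `n` let `Yⁿ` and the `⌈2^{nR̂}⌉` codewords
`Ŷⁿ(z)` have an arbitrary joint distribution such that for every `z ≠ z0` the
codeword `Ŷⁿ(z)` is i.i.d. `∼ p(ŷ)` and independent of `Yⁿ`, and let each index be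
assigned independently and uniformly to one of `⌈2^{nR}⌉` bins.  There is `δ(ε) > 0`
with `δ(ε) → 0` as `ε → 0` such that if `R̂ < R + I(Ŷ;Y) − δ(ε)` then the probability
that some `z ≠ z0` lies in the bin of `z0` and is jointly strongly `ε`-typical with
`Yⁿ` tends to `0`. -/
theorem binning_list_decoding
    {H Y : Type} [Fintype H] [Fintype Y]
    (p : H × Y → ℝ) (hp : IsPmf p) :
    ∃ δ : ℝ → ℝ, (∀ ε : ℝ, 0 < ε → 0 < δ ε) ∧
      Filter.Tendsto δ (nhdsWithin 0 (Set.Ioi 0)) (nhds 0) ∧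
      ∀ ε : ℝ, 0 < ε → ∀ R Rh : ℝ,
        Rh < R + rvMI p (fun ω => ω.1) (fun ω => ω.2) - δ ε →
        ∀ (ν : (n : ℕ) →
              ((Fin n → Y) × (Fin ⌈(2:ℝ) ^ ((n:ℝ) * Rh)⌉₊ → Fin n → H) → ℝ))
          (z0 : (n : ℕ) → Fin ⌈(2:ℝ) ^ ((n:ℝ) * Rh)⌉₊),
          (∀ n, IsPmf (ν n)) →
          -- for `z ≠ z0`, `Ŷⁿ(z)` is i.i.d. `∼ p(ŷ)` and independent of `Yⁿ`
          (∀ (n : ℕ) (z : Fin ⌈(2:ℝ) ^ ((n:ℝ) * Rh)⌉₊), z ≠ z0 n →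
            ∀ (y : Fin n → Y) (u : Fin n → H),
              rvDist (ν n) (fun ω => (ω.1, ω.2 z)) (y, u) =
                rvDist (ν n) (fun ω => ω.1) y * ∏ j, margH p (u j)) →
          Filter.Tendsto
            (fun n : ℕ => binProb p ε ⌈(2:ℝ) ^ ((n:ℝ) * R)⌉₊ (z0 n) (ν n))
            Filter.atTop (nhds 0) := by
  set S := rvEnt p Prod.fst + rvEnt p Prod.snd + shannonEntropy p
  refine ⟨fun ε => ε * (1 + |S|), fun ε hε => by positivity, ?_, ?_⟩
  · simpa using ((Filter.tendsto_id (x := nhds (0 : ℝ))).mul_const (1 + |S|)).mono_left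
      nhdsWithin_le_nhds
  intro ε hε R Rh hR ν z₀ hν hind
  set κ := Rh - R + listExponent p ε
  have hκ : κ < 0 := by
    rw [rvMI_fst_snd] at hR
    simp only [κ, listExponent]
    nlinarith [mul_le_mul_of_nonneg_left (le_abs_self S) hε.le]
  refine squeeze_zero (fun n => binProb_nonneg p ε _ _ (hν n).1) (fun n => ?_)
    (tendsto_two_rpow_natCast_mul_of_neg hκ)
  have hB : 0 < ⌈(2:ℝ) ^ ((n:ℝ) * R)⌉₊ := Nat.ceil_pos.mpr (by positivity)
  calc binProb p ε ⌈(2:ℝ) ^ ((n:ℝ) * R)⌉₊ (z₀ n) (ν n)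
      ≤ ((⌈(2:ℝ) ^ ((n:ℝ) * Rh)⌉₊ - 1 : ℕ) : ℝ) * ((⌈(2:ℝ) ^ ((n:ℝ) * R)⌉₊ : ℝ)⁻¹
          * (2 : ℝ) ^ (n * listExponent p ε)) :=
        binProb_le p ε hB (z₀ n) (hν n).1 fun z hz =>
          sum_typical_le_of_indep hp ε (hν n) _ _ (hind n z hz)
    _ ≤ (2:ℝ) ^ ((n:ℝ) * Rh) * (((2:ℝ) ^ ((n:ℝ) * R))⁻¹
          * (2 : ℝ) ^ (n * listExponent p ε)) := by
        gcongr
        · exact natCast_ceil_sub_one_le (by positivity)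
        · exact Nat.le_ceil _
    _ = (2 : ℝ) ^ ((n : ℝ) * κ) := by
        rw [← Real.rpow_neg zero_le_two, ← Real.rpow_add two_pos, ← Real.rpow_add two_pos]
        congr 1
        simp only [κ]
        ring

end
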